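/- arXiv:math/0509522 — 2 statements merged into one kernel-verified Lean document; each statement's English description precedes it below -/
import Mathlib

section
/- Let W be a random walk started at 0 with jump distribution ν supported on {-1, 0, 1, 2, ...}, and let p be such that P(W_p = -1) > 0. Define G_p as the first time in {0,...,p} at which (W_k; 0 ≤ k ≤ p) attains its minimum, and let V_0 denote the discrete Vervaat transform (cyclic shift at the first minimum). Then the law of the path V_0((W_k; 0 ≤ k ≤ p)) under P(· | W_p = -1) equals the law of (W_k; 0 ≤ k ≤ p) under P(· | ζ = p), where ζ = inf{ n : W_n = -1 }. -/
open MeasureTheory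

/-- The discrete height functional:
`H_n(w) = Card { 0 ≤ j < n : w j = min_{j ≤ k ≤ n} w k }`. -/
noncomputable def pathHeight (w : ℕ → ℤ) (n : ℕ) : ℕ :=
  {j : ℕ | j < n ∧ w j = sInf (w '' Set.Icc j n)}.ncard

/-- `L_n(w) = Card { 0 < j ≤ n : w j = max_{0 ≤ k ≤ j} w k }`. -/
noncomputable def pathL (w : ℕ → ℤ) (n : ℕ) : ℕ :=
  {j : ℕ | 0 < j ∧ j ≤ n ∧ w j = sSup (w '' Set.Icc 0 j)}.ncard

/-- The time-space reversed path `ŵ^p(k) = w(p) - w(p-k)`. -/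
def pathRev (w : ℕ → ℤ) (p : ℕ) : ℕ → ℤ := fun k => w p - w (p - k)

/-- The first passage time `t(a,w) = inf { k ∈ [0,z] : w k ≥ a }` (with
`inf ∅ = ⊤` in `ℕ∞`). -/
noncomputable def firstPassage (z : ℕ) (a : ℤ) (w : ℕ → ℤ) : ℕ∞ :=
  sInf ((fun j : ℕ => (j : ℕ∞)) '' {j : ℕ | j ≤ z ∧ a ≤ w j})

/-- `γ_p(k) = p ∧ ( t( -min_{0 ≤ i ≤ k} w i, ŵ^p ) - 1 )_+`. -/
noncomputable def gammaP (w : ℕ → ℤ) (p k : ℕ) : ℕ :=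
  (min (p : ℕ∞)
    (firstPassage p (-(sInf (w '' Set.Icc 0 k))) (pathRev w p) - 1)).toNat

/-- `M_k = L_p(ŵ^p) - L_{γ_p(k)}(ŵ^p)`. -/
noncomputable def pathM (w : ℕ → ℤ) (p k : ℕ) : ℕ :=
  pathL (pathRev w p) p - pathL (pathRev w p) (gammaP w p k)

/-- `G(w)`: the first time in `{0,…,p}` at which `w` attains its minimum over
`{0,…,p}`. -/
noncomputable def firstMin (p : ℕ) (w : ℕ → ℤ) : ℕ :=
  sInf {k : ℕ | k ≤ p ∧ ∀ j ≤ p, w k ≤ w j}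

/-- The discrete Vervaat transform of the path `(w k; 0 ≤ k ≤ p)`: cyclic shift at
the first minimum. -/
noncomputable def vervaat0 (p : ℕ) (w : ℕ → ℤ) : ℕ → ℤ := fun k =>
  if k ≤ p - firstMin p w then w (k + firstMin p w) - sInf (w '' Set.Icc 0 p)
  else w (k + firstMin p w - p) + w p - sInf (w '' Set.Icc 0 p) - w 0

/-!
The walk is a function of its increments `x : Fin p → ℤ`, whose law `ν^p` is invariant under
cyclic rotations of the coordinates. If the increments sum to `-1`, the Vervaat transform of the
path is the path of `x` rotated by its first minimum time `G`, and that path stays `≥ 0` before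
time `p`. Conversely, rotating such an "excursion" back by any `g : Fin p` gives increments whose
first minimum time is `g` modulo `p`. So `x ↦ (rotated x, G mod p)` is a bijection from the
bridges (sum `-1`) onto excursions `× Fin p` (the cycle lemma), and by rotation invariance an
event about the rotated path has `ν^p`-measure `p` times its measure on excursions. Since the
increments are `≥ -1` almost surely, `{ζ = p}` is almost surely the set of excursions; both sides
of the identity equal `p · ν^p(excursions, path = f) · ν^p(excursions)`.
-/

open ProbabilityTheory
open scoped Fin.NatCast

lemma Nat.sInf_setOf_eq_iff {P : ℕ → Prop} {p : ℕ} (hp : 0 < p) :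
    sInf {n | P n} = p ↔ P p ∧ ∀ n < p, ¬ P n := by
  refine ⟨fun h => ?_, fun h => le_antisymm (Nat.sInf_le h.1)
    (not_lt.1 fun hlt => h.2 _ hlt (Nat.sInf_mem ⟨p, h.1⟩))⟩
  have hne : {n | P n}.Nonempty := Set.nonempty_iff_ne_empty.2 fun he => by
    rw [he, Nat.sInf_empty] at h
    omega
  exact ⟨h ▸ Nat.sInf_mem hne, fun n hn => Nat.notMem_of_lt_sInf (h ▸ hn)⟩

namespace Vervaat

section FirstMin

variable {q : ℕ} {w w' : ℕ → ℤ}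

lemma firstMin_spec (q : ℕ) (w : ℕ → ℤ) :
    firstMin q w ≤ q ∧ ∀ j ≤ q, w (firstMin q w) ≤ w j := by
  refine Nat.sInf_mem (s := {k | k ≤ q ∧ ∀ j ≤ q, w k ≤ w j}) ?_
  obtain ⟨k, hk, hmin⟩ := Finset.exists_min_image (Finset.range (q + 1)) w ⟨0, by simp⟩
  exact ⟨k, Nat.lt_succ_iff.mp (Finset.mem_range.mp hk),
    fun j hj => hmin j (Finset.mem_range.mpr (Nat.lt_succ_of_le hj))⟩

lemma firstMin_le (q : ℕ) (w : ℕ → ℤ) : firstMin q w ≤ q := (firstMin_spec q w).1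

lemma apply_firstMin_le {j : ℕ} (hj : j ≤ q) : w (firstMin q w) ≤ w j :=
  (firstMin_spec q w).2 j hj

lemma apply_firstMin_lt {k : ℕ} (hk : k < firstMin q w) : w (firstMin q w) < w k := by
  have hk' := Nat.notMem_of_lt_sInf hk
  simp only [Set.mem_ofPred_eq, not_and, not_forall, not_le] at hk'
  obtain ⟨j, hj, hjk⟩ := hk' (hk.le.trans (firstMin_le q w))
  exact (apply_firstMin_le hj).trans_lt hjk

lemma firstMin_eq {g : ℕ} (hg : g ≤ q) (hle : ∀ j ≤ q, w g ≤ w j) (hlt : ∀ j < g, w g < w j) :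
    firstMin q w = g := by
  have hmem : g ∈ {k | k ≤ q ∧ ∀ j ≤ q, w k ≤ w j} := ⟨hg, hle⟩
  exact (Nat.sInf_le hmem).antisymm
    (not_lt.mp fun h => (apply_firstMin_le (w := w) hg).not_gt (hlt _ h))

lemma sInf_image_Icc_eq : sInf (w '' Set.Icc 0 q) = w (firstMin q w) := by
  refine le_antisymm (csInf_le ((Set.finite_Icc 0 q).image w).bddBelow
    ⟨_, ⟨Nat.zero_le _, firstMin_le q w⟩, rfl⟩) (le_csInf ⟨w 0, 0, by simp, rfl⟩ ?_)
  rintro _ ⟨j, hj, rfl⟩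
  exact apply_firstMin_le hj.2

lemma firstMin_congr (h : ∀ j ≤ q, w j = w' j) : firstMin q w = firstMin q w' := by
  unfold firstMin
  congr 1
  ext k
  refine and_congr_right fun hk => forall₂_congr fun j hj => ?_
  rw [h k hk, h j hj]

lemma vervaat0_congr (h : ∀ j ≤ q, w j = w' j) {k : ℕ} (hk : k ≤ q) :
    vervaat0 q w k = vervaat0 q w' k := by
  have hG := firstMin_le q w'
  unfold vervaat0
  rw [firstMin_congr h, Set.image_congr fun j hj => h j hj.2]
  split_ifs
  · rw [h _ (by omega)]
  · rw [h _ (by omega), h q le_rfl, h 0 (Nat.zero_le q)]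

end FirstMin

section Walk

variable {p : ℕ} [NeZero p]

/-- The walk with increments `x`, indexed cyclically: `walk x n = x 0 + ⋯ + x (n - 1)` with the
indices read modulo `p`. -/
def walk (x : Fin p → ℤ) (n : ℕ) : ℤ := ∑ i ∈ Finset.range n, x i

def rotate (g : Fin p) (x : Fin p → ℤ) : Fin p → ℤ := fun i => x (i + g)

variable {x : Fin p → ℤ}

@[simp] lemma walk_zero : walk x 0 = 0 := rfl

lemma walk_succ (n : ℕ) : walk x (n + 1) = walk x n + x n := Finset.sum_range_succ _ _

lemma walk_rotate (g n : ℕ) : walk (rotate g x) n = walk x (g + n) - walk x g := by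
  simp only [walk, rotate, Finset.sum_range_add, Nat.cast_add, add_comm (g : Fin p)]
  ring

lemma walk_period (x : Fin p → ℤ) : walk x p = ∑ i, x i := by
  simp only [walk, ← Fin.sum_univ_eq_sum_range (fun i => x i), Fin.cast_val_eq_self]

@[simp] lemma walk_rotate_period (g : Fin p) : walk (rotate g x) p = walk x p := by
  simp only [walk_period, rotate]
  exact Equiv.sum_comp (Equiv.addRight g) x

lemma walk_add_period (n : ℕ) : walk x (n + p) = walk x n + walk x p := by
  have := walk_rotate (x := x) n p
  rw [walk_rotate_period] at this
  linarith

end Walk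

section CycleLemma

variable {p : ℕ} [NeZero p]

def bridges (p : ℕ) [NeZero p] : Set (Fin p → ℤ) := {x | walk x p = -1}

def excursions (p : ℕ) [NeZero p] : Set (Fin p → ℤ) :=
  {y | walk y p = -1 ∧ ∀ n < p, 0 ≤ walk y n}

def firstHits (p : ℕ) [NeZero p] : Set (Fin p → ℤ) :=
  {x | walk x p = -1 ∧ ∀ n < p, walk x n ≠ -1}

noncomputable def minShift (x : Fin p → ℤ) : Fin p := (firstMin p (walk x) : ℕ)

variable {x : Fin p → ℤ}

lemma rotate_minShift_mem_excursions (hx : x ∈ bridges p) :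
    rotate (minShift x) x ∈ excursions p := by
  have hsum : walk x p = -1 := hx
  refine ⟨(walk_rotate_period _).trans hsum, fun n hn => ?_⟩
  rw [minShift, walk_rotate, sub_nonneg]
  rcases le_or_gt (firstMin p (walk x) + n) p with h | h
  · exact apply_firstMin_le h
  · obtain ⟨m, hm⟩ : ∃ m, firstMin p (walk x) + n = m + p := ⟨_, (Nat.sub_add_cancel h.le).symm⟩
    have hlt := apply_firstMin_lt (q := p) (w := walk x) (k := m) (by omega)
    rw [hm, walk_add_period, hsum]
    omega

lemma firstMin_eq_of_rotate_mem_excursions {g : ℕ} (hg0 : 0 < g) (hgp : g ≤ p)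
    (h : rotate g x ∈ excursions p) : firstMin p (walk x) = g := by
  obtain ⟨hsum, hnonneg⟩ := h
  rw [walk_rotate_period] at hsum
  have above : ∀ n < p, walk x g ≤ walk x (g + n) := fun n hn => by
    linarith [walk_rotate (x := x) g n, hnonneg n hn]
  have below : ∀ j < g, walk x g < walk x j := fun j hj => by
    have := above (j + p - g) (by omega)
    rw [show g + (j + p - g) = j + p by omega, walk_add_period, hsum] at this
    omega
  refine firstMin_eq hgp (fun j hj => ?_) below
  rcases le_or_gt g j with hgj | hjg
  · simpa [Nat.add_sub_cancel' hgj] using above (j - g) (by omega)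
  · exact (below j hjg).le

lemma minShift_eq_of_rotate_mem_excursions {g : Fin p} (h : rotate g x ∈ excursions p) :
    minShift x = g := by
  obtain ⟨n, hn0, hnp, rfl⟩ : ∃ n, 0 < n ∧ n ≤ p ∧ (n : Fin p) = g := by
    rcases Nat.eq_zero_or_pos g.val with hg | hg
    · exact ⟨p, Nat.pos_of_neZero p, le_rfl, by rw [Fin.natCast_self]; exact (Fin.ext hg).symm⟩
    · exact ⟨g, hg, g.isLt.le, Fin.cast_val_eq_self g⟩
  rw [minShift, firstMin_eq_of_rotate_mem_excursions hn0 hnp h]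

lemma vervaat0_walk (x : Fin p → ℤ) (k : ℕ) :
    vervaat0 p (walk x) k = walk (rotate (minShift x) x) k := by
  have hG := firstMin_le p (walk x)
  rw [minShift, walk_rotate, vervaat0, sInf_image_Icc_eq]
  split_ifs
  · rw [add_comm]
  · rw [walk_zero, show firstMin p (walk x) + k = k + firstMin p (walk x) - p + p by omega,
      walk_add_period]
    ring

lemma bridges_inter_eq_iUnion (s : Set (Fin p → ℤ)) :
    bridges p ∩ {x | rotate (minShift x) x ∈ s} = ⋃ g, rotate g ⁻¹' (excursions p ∩ s) := by
  ext x
  simp only [Set.mem_inter_iff, Set.mem_ofPred_eq, Set.mem_iUnion, Set.mem_preimage]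
  constructor
  · rintro ⟨hx, hs⟩
    exact ⟨minShift x, rotate_minShift_mem_excursions hx, hs⟩
  · rintro ⟨g, hE, hs⟩
    rw [minShift_eq_of_rotate_mem_excursions hE]
    exact ⟨(walk_rotate_period g).symm.trans hE.1, hs⟩

lemma walk_nonneg_of_ne (hx : ∀ i, -1 ≤ x i) {m : ℕ} (hne : ∀ n ≤ m, walk x n ≠ -1) :
    0 ≤ walk x m := by
  induction m with
  | zero => simp
  | succ m ih =>
    have := ih fun n hn => hne n (by omega)
    have := hne (m + 1) le_rfl
    have := hx m
    rw [walk_succ] at *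
    omega

lemma excursions_subset_firstHits : excursions p ⊆ firstHits p :=
  fun _ hy => ⟨hy.1, fun n hn => by linarith [hy.2 n hn]⟩

end CycleLemma

section Measure

variable {p : ℕ} [NeZero p] (ν : Measure ℤ)

lemma measurePreserving_rotate [SigmaFinite ν] (g : Fin p) :
    MeasurePreserving (rotate g) (Measure.pi fun _ => ν) (Measure.pi fun _ => ν) :=
  measurePreserving_arrowCongr' (fun _ => ν) (fun _ => ν) (Equiv.addRight g).symm
    (MeasurableEquiv.refl ℤ) fun _ => MeasurePreserving.id ν

lemma measure_bridges_inter [SigmaFinite ν] (s : Set (Fin p → ℤ)) :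
    Measure.pi (fun _ => ν) (bridges p ∩ {x | rotate (minShift x) x ∈ s})
      = p * Measure.pi (fun _ => ν) (excursions p ∩ s) := by
  rw [bridges_inter_eq_iUnion, measure_iUnion ?_ fun _ => .of_discrete]
  · simp only [(measurePreserving_rotate ν _).measure_preimage
      MeasurableSet.of_discrete.nullMeasurableSet, tsum_fintype, Finset.sum_const, Finset.card_univ,
      Fintype.card_fin, nsmul_eq_mul]
  · refine fun g g' hne => Set.disjoint_left.2 fun x hg hg' => hne ?_
    rw [← minShift_eq_of_rotate_mem_excursions hg.1, minShift_eq_of_rotate_mem_excursions hg'.1]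

lemma firstHits_ae_eq_excursions [SigmaFinite ν] (hν : ν {k | k < -1} = 0) :
    firstHits p =ᵐ[Measure.pi fun _ => ν] excursions p := by
  have hstep : ∀ᵐ x ∂(Measure.pi fun _ : Fin p => ν), ∀ i, -1 ≤ x i :=
    ae_all_iff.2 fun _ => Measure.tendsto_eval_ae_ae.eventually (ae_iff.2 (by simpa using hν))
  filter_upwards [hstep] with x hx
  refine propext ⟨fun h => ⟨h.1, fun n hn => walk_nonneg_of_ne hx fun k hk => h.2 k (by omega)⟩,
    fun h => excursions_subset_firstHits h⟩

end Measure

lemma pi_vervaat_mul_pi_firstHits {p : ℕ} [NeZero p] (ν : Measure ℤ) [SigmaFinite ν]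
    (hν : ν {k | k < -1} = 0) (f : ℕ → ℤ) :
    Measure.pi (fun _ => ν) (bridges p ∩ {x | ∀ k ≤ p, vervaat0 p (walk x) k = f k})
        * Measure.pi (fun _ => ν) (firstHits p)
      = Measure.pi (fun _ => ν) (firstHits p ∩ {x | ∀ k ≤ p, walk x k = f k})
        * Measure.pi (fun _ => ν) (bridges p) := by
  have hE := firstHits_ae_eq_excursions (p := p) ν hν
  have hD : Measure.pi (fun _ => ν) (bridges p) = p * Measure.pi (fun _ => ν) (excursions p) := by
    simpa using measure_bridges_inter ν (p := p) Set.univ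
  have hA : {x : Fin p → ℤ | ∀ k ≤ p, vervaat0 p (walk x) k = f k}
      = {x | rotate (minShift x) x ∈ {y | ∀ k ≤ p, walk y k = f k}} :=
    Set.ext fun x => by simp only [Set.mem_ofPred_eq, vervaat0_walk]
  rw [hA, measure_bridges_inter, hD, measure_congr hE,
    measure_congr (hE.inter (ae_eq_refl {x : Fin p → ℤ | ∀ k ≤ p, walk x k = f k}))]
  ring

lemma walk_eq_sum_range {p : ℕ} [NeZero p] (y : ℕ → ℤ) {k : ℕ} (hk : k ≤ p) :
    walk (fun i : Fin p => y i) k = ∑ i ∈ Finset.range k, y i :=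
  Finset.sum_congr rfl fun i hi => by
    dsimp only
    rw [Fin.val_natCast, Nat.mod_eq_of_lt ((Finset.mem_range.1 hi).trans_le hk)]

lemma map_increments_eq_pi {Ω : Type*} [MeasurableSpace Ω] {P : Measure Ω} {ν : Measure ℤ}
    {ξ : ℕ → Ω → ℤ} (hmeas : ∀ i, Measurable (ξ i)) (hindep : iIndepFun ξ P)
    (hdist : ∀ i, P.map (ξ i) = ν) (p : ℕ) :
    P.map (fun ω (i : Fin p) => ξ i ω) = Measure.pi fun _ => ν := by
  rw [(hindep.precomp Fin.val_injective).map_fun_eq_pi_map fun i : Fin p => (hmeas i).aemeasurable]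
  simp only [hdist]

end Vervaat

open Vervaat

theorem discrete_vervaat_general {Ω : Type*} [MeasurableSpace Ω] (P : Measure Ω)
    (ν : Measure ℤ) [IsProbabilityMeasure ν] (hν : ν {k : ℤ | k < -1} = 0)
    (ξ : ℕ → Ω → ℤ) (hmeas : ∀ i, Measurable (ξ i))
    (hindep : ProbabilityTheory.iIndepFun ξ P)
    (hdist : ∀ i, Measure.map (ξ i) P = ν)
    (W : ℕ → Ω → ℤ) (hW : ∀ n ω, W n ω = ∑ i ∈ Finset.range n, ξ i ω)
    (ζ : Ω → ℕ) (hζ : ∀ ω, ζ ω = sInf {n : ℕ | W n ω = -1})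
    (p : ℕ) (f : ℕ → ℤ) :
    P {ω | W p ω = -1 ∧ ∀ k ≤ p, vervaat0 p (fun m => W m ω) k = f k} *
      P {ω | ζ ω = p}
    = P {ω | ζ ω = p ∧ ∀ k ≤ p, W k ω = f k} * P {ω | W p ω = -1} := by
  rcases Nat.eq_zero_or_pos p with rfl | hp
  · simp [hW]
  have : NeZero p := ⟨hp.ne'⟩
  set T : Ω → Fin p → ℤ := fun ω i => ξ i ω
  have hlaw : ∀ s, P (T ⁻¹' s) = Measure.pi (fun _ => ν) s := fun s => by
    rw [← Measure.map_apply (measurable_pi_lambda T fun i => hmeas i) .of_discrete,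
      map_increments_eq_pi hmeas hindep hdist]
  have hwalk : ∀ ω, ∀ k ≤ p, W k ω = walk (T ω) k := fun ω k hk =>
    (hW k ω).trans (walk_eq_sum_range (ξ · ω) hk).symm
  have hζT : ∀ ω, ζ ω = p ↔ T ω ∈ firstHits p := fun ω => by
    rw [hζ, Nat.sInf_setOf_eq_iff hp, hwalk ω p le_rfl]
    exact and_congr_right' (forall₂_congr fun n hn => by rw [hwalk ω n hn.le])
  have hA : {ω | W p ω = -1 ∧ ∀ k ≤ p, vervaat0 p (fun m => W m ω) k = f k}
      = T ⁻¹' (bridges p ∩ {x | ∀ k ≤ p, vervaat0 p (walk x) k = f k}) := by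
    ext ω
    refine and_congr (by rw [hwalk ω p le_rfl]; rfl) (forall₂_congr fun k hk => ?_)
    rw [vervaat0_congr (hwalk ω) hk]
  have hC : {ω | ζ ω = p ∧ ∀ k ≤ p, W k ω = f k}
      = T ⁻¹' (firstHits p ∩ {x | ∀ k ≤ p, walk x k = f k}) := by
    ext ω
    exact and_congr (hζT ω) (forall₂_congr fun k hk => by rw [hwalk ω k hk])
  have hD : {ω | W p ω = -1} = T ⁻¹' bridges p := by
    ext ω
    exact iff_of_eq (congrArg (· = -1) (hwalk ω p le_rfl))
  rw [hA, hC, hD, show {ω | ζ ω = p} = T ⁻¹' firstHits p from Set.ext hζT, hlaw, hlaw, hlaw, hlaw]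
  exact pi_vervaat_mul_pi_firstHits ν hν f

/-- Vervaat's theorem for left-continuous random walks: the law of
`V_0((W_k; 0 ≤ k ≤ p))` under `P(· | W_p = -1)` equals the law of `(W_k; 0 ≤ k ≤ p)`
under `P(· | ζ = p)` (stated in cross-multiplied form for every cylinder event). -/
theorem discrete_vervaat {Ω : Type*} [MeasurableSpace Ω] (P : Measure Ω)
    [IsProbabilityMeasure P]
    (ν : Measure ℤ) [IsProbabilityMeasure ν] (hν : ν {k : ℤ | k < -1} = 0)
    (ξ : ℕ → Ω → ℤ) (hmeas : ∀ i, Measurable (ξ i))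
    (hindep : ProbabilityTheory.iIndepFun ξ P)
    (hdist : ∀ i, Measure.map (ξ i) P = ν)
    (W : ℕ → Ω → ℤ) (hW : ∀ n ω, W n ω = ∑ i ∈ Finset.range n, ξ i ω)
    (ζ : Ω → ℕ) (hζ : ∀ ω, ζ ω = sInf {n : ℕ | W n ω = -1})
    (p : ℕ) (hp : 1 ≤ p) (hpos : P {ω | W p ω = -1} ≠ 0) (f : ℕ → ℤ) :
    P {ω | W p ω = -1 ∧ ∀ k ≤ p, vervaat0 p (fun m => W m ω) k = f k} *
      P {ω | ζ ω = p}
    = P {ω | ζ ω = p ∧ ∀ k ≤ p, W k ω = f k} * P {ω | W p ω = -1} :=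
  discrete_vervaat_general P ν hν ξ hmeas hindep hdist W hW ζ hζ p f
end

section
/- Let W be a random walk with jumps ≥ -1 and p such that P(W_p = -1) > 0. Define H_n(W) = Card{ 0 ≤ j < n : W_j = min_{j ≤ k ≤ n} W_k }, Ŵ^p the time-space reversal of (W_k)_{0 ≤ k ≤ p}, γ_p(k) = p ∧ ( t( -min_{0 ≤ i ≤ k} W_i, Ŵ^p ) - 1 )_+, and M_k = L_p(Ŵ^p) - L_{γ_p(k)}(Ŵ^p) for 0 ≤ k ≤ p. Then P(· | W_p = -1)-almost surely, for every l ∈ {0,...,p}: M_l = Card{ 0 ≤ j < p : W_j = min_{j ≤ k ≤ p} W_k and W_j ≤ -1 + min_{0 ≤ k ≤ l} W_k }. -/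
open MeasureTheory

/-!
Reversing time and space turns future minima of `w` into records (running maxima) of
`ŵ = pathRev w p`, and the index `j` of `ŵ` into the time `p - j` of `w`. Since `ŵ` at a record
time `j` dominates its whole past, `ŵ j` reaches the level `-min_{[0,l]} w` exactly when the
first passage time to that level is at most `j`, i.e. when `j > γ_p(l)`. Hence the records of `ŵ`
counted by `M_l = L_p(ŵ) - L_{γ_p(l)}(ŵ)` correspond, via `j ↦ p - j`, to the future minima
`w i` of `w` with `w i ≤ w p + min_{[0,l]} w`.
-/

lemma eq_sInf_image_Icc_iff {w : ℕ → ℤ} {a b j : ℕ} (hj : j ∈ Set.Icc a b) :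
    w j = sInf (w '' Set.Icc a b) ↔ ∀ k ∈ Set.Icc a b, w j ≤ w k := by
  have hbdd : BddBelow (w '' Set.Icc a b) := ((Set.finite_Icc a b).image w).bddBelow
  constructor
  · intro h k hk
    exact h ▸ csInf_le hbdd ⟨k, hk, rfl⟩
  · intro h
    exact le_antisymm (le_csInf ⟨w j, j, hj, rfl⟩ (by rintro _ ⟨k, hk, rfl⟩; exact h k hk))
      (csInf_le hbdd ⟨j, hj, rfl⟩)

lemma eq_sSup_image_Icc_iff {w : ℕ → ℤ} {a b j : ℕ} (hj : j ∈ Set.Icc a b) :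
    w j = sSup (w '' Set.Icc a b) ↔ ∀ k ∈ Set.Icc a b, w k ≤ w j := by
  have hbdd : BddAbove (w '' Set.Icc a b) := ((Set.finite_Icc a b).image w).bddAbove
  constructor
  · intro h k hk
    exact h ▸ le_csSup hbdd ⟨k, hk, rfl⟩
  · intro h
    exact le_antisymm (le_csSup hbdd ⟨j, hj, rfl⟩)
      (csSup_le ⟨w j, j, hj, rfl⟩ (by rintro _ ⟨k, hk, rfl⟩; exact h k hk))

lemma pathRev_eq_sSup_iff (w : ℕ → ℤ) {p j : ℕ} (hj : j ≤ p) :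
    pathRev w p j = sSup (pathRev w p '' Set.Icc 0 j) ↔
      w (p - j) = sInf (w '' Set.Icc (p - j) p) := by
  rw [eq_sSup_image_Icc_iff ⟨Nat.zero_le j, le_rfl⟩,
    eq_sInf_image_Icc_iff ⟨le_rfl, Nat.sub_le p j⟩]
  simp only [pathRev, Set.mem_Icc, sub_le_sub_iff_left]
  constructor
  · rintro h i ⟨hji, hip⟩
    simpa [Nat.sub_sub_self hip] using h (p - i) ⟨Nat.zero_le _, by omega⟩
  · rintro h k ⟨-, hkj⟩
    exact h (p - k) ⟨by omega, Nat.sub_le p k⟩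

lemma pathL_sub_pathL (v : ℕ → ℤ) {m n : ℕ} (hmn : m ≤ n) :
    pathL v n - pathL v m =
      {j : ℕ | m < j ∧ j ≤ n ∧ v j = sSup (v '' Set.Icc 0 j)}.ncard := by
  set A : ℕ → Set ℕ := fun s => {j | 0 < j ∧ j ≤ s ∧ v j = sSup (v '' Set.Icc 0 j)}
  have hsub : A m ⊆ A n := fun j ⟨h0, hjm, hj⟩ => ⟨h0, hjm.trans hmn, hj⟩
  have hfin : (A m).Finite := (Set.finite_Icc 1 m).subset fun j hj => ⟨hj.1, hj.2.1⟩
  change (A n).ncard - (A m).ncard = _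
  rw [← Set.ncard_sdiff hsub hfin]
  congr 1
  ext j
  simp only [A, Set.mem_sdiff, Set.mem_ofPred_eq]
  constructor
  · rintro ⟨⟨h0, hjn, hj⟩, hnot⟩
    exact ⟨by_contra fun hjm => hnot ⟨by omega, by omega, hj⟩, hjn, hj⟩
  · rintro ⟨hmj, hjn, hj⟩
    exact ⟨⟨by omega, hjn, hj⟩, fun h => by omega⟩

lemma firstPassage_le_natCast_iff {z : ℕ} {a : ℤ} {v : ℕ → ℤ} {j : ℕ} :
    firstPassage z a v ≤ j ↔ ∃ k ≤ j, k ≤ z ∧ a ≤ v k := by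
  constructor
  · intro h
    have hne : ((fun k : ℕ => (k : ℕ∞)) '' {k | k ≤ z ∧ a ≤ v k}).Nonempty := by
      by_contra hemp
      simp only [firstPassage, Set.not_nonempty_iff_eq_empty.mp hemp, sInf_empty,
        top_le_iff, ENat.natCast_ne_top] at h
    obtain ⟨k, hk, hkeq⟩ := csInf_mem hne
    rw [firstPassage, ← hkeq, Nat.cast_le] at h
    exact ⟨k, h, hk⟩
  · rintro ⟨k, hkj, hk⟩
    exact (sInf_le (Set.mem_image_of_mem (fun k : ℕ => (k : ℕ∞)) hk)).trans
      (Nat.cast_le.mpr hkj)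

lemma toNat_min_firstPassage_sub_one_lt_iff {v : ℕ → ℤ} {a : ℤ} {p j : ℕ} (hj0 : 0 < j)
    (hjp : j ≤ p) (hrec : ∀ k ≤ j, v k ≤ v j) :
    (min (p : ℕ∞) (firstPassage p a v - 1)).toNat < j ↔ a ≤ v j := by
  have hpassage : firstPassage p a v ≤ j ↔ a ≤ v j :=
    firstPassage_le_natCast_iff.trans
      ⟨fun ⟨k, hkj, _, hk⟩ => hk.trans (hrec k hkj), fun h => ⟨j, le_rfl, hjp, h⟩⟩
  rw [← hpassage]
  cases h : firstPassage p a v with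
  | top => simp [hjp]
  | coe t =>
    rw [← ENat.natCast_one, ← ENat.natCast_sub, ← Nat.mono_cast.map_min, ENat.toNat_natCast,
      Nat.cast_le]
    omega

lemma gammaP_le (w : ℕ → ℤ) (p k : ℕ) : gammaP w p k ≤ p :=
  ENat.toNat_le_of_le_natCast (min_le_left _ _)

lemma gammaP_lt_iff {w : ℕ → ℤ} {p j : ℕ} (l : ℕ) (hj0 : 0 < j) (hjp : j ≤ p)
    (hrec : w (p - j) = sInf (w '' Set.Icc (p - j) p)) :
    gammaP w p l < j ↔ w (p - j) ≤ w p + sInf (w '' Set.Icc 0 l) := by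
  have hrec' : ∀ k ≤ j, pathRev w p k ≤ pathRev w p j := fun k hk =>
    ((eq_sSup_image_Icc_iff ⟨Nat.zero_le j, le_rfl⟩).mp
      ((pathRev_eq_sSup_iff w hjp).mpr hrec)) k ⟨Nat.zero_le k, hk⟩
  rw [gammaP, toNat_min_firstPassage_sub_one_lt_iff hj0 hjp hrec', pathRev]
  constructor <;> intro h <;> linarith

theorem pathM_eq_ncard (w : ℕ → ℤ) (p l : ℕ) :
    pathM w p l =
      {j : ℕ | j < p ∧ w j = sInf (w '' Set.Icc j p) ∧
        w j ≤ w p + sInf (w '' Set.Icc 0 l)}.ncard := by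
  rw [pathM, pathL_sub_pathL _ (gammaP_le w p l)]
  have hreflect : {j : ℕ | j < p ∧ w j = sInf (w '' Set.Icc j p) ∧
      w j ≤ w p + sInf (w '' Set.Icc 0 l)} =
      (p - ·) '' {j : ℕ | gammaP w p l < j ∧ j ≤ p ∧
        pathRev w p j = sSup (pathRev w p '' Set.Icc 0 j)} := by
    ext i
    simp only [Set.mem_ofPred_eq, Set.mem_image]
    constructor
    · rintro ⟨hip, hmin, hle⟩
      have hpi : p - (p - i) = i := by omega
      have hrec : w (p - (p - i)) = sInf (w '' Set.Icc (p - (p - i)) p) := by rwa [hpi]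
      refine ⟨p - i, ⟨?_, Nat.sub_le p i, (pathRev_eq_sSup_iff w (Nat.sub_le p i)).mpr hrec⟩,
        hpi⟩
      exact (gammaP_lt_iff l (by omega) (Nat.sub_le p i) hrec).mpr (by rwa [hpi])
    · rintro ⟨j, ⟨hγj, hjp, hj⟩, rfl⟩
      have hrec := (pathRev_eq_sSup_iff w hjp).mp hj
      exact ⟨by omega, hrec, (gammaP_lt_iff l (by omega) hjp hrec).mp hγj⟩
  rw [hreflect, Set.InjOn.ncard_image]
  rintro x ⟨-, hx, -⟩ y ⟨-, hy, -⟩ hxy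
  simp only at hxy
  omega

theorem M_combinatorial_formula_general {Ω : Type*} [MeasurableSpace Ω] (P : Measure Ω)
    (W : ℕ → Ω → ℤ) (p : ℕ) :
    ∀ᵐ ω ∂P, W p ω = -1 → ∀ l ≤ p,
      pathM (fun m => W m ω) p l =
        {j : ℕ | j < p ∧ W j ω = sInf ((fun m => W m ω) '' Set.Icc j p) ∧
          W j ω ≤ -1 + sInf ((fun m => W m ω) '' Set.Icc 0 l)}.ncard :=
  Filter.Eventually.of_forall fun ω hWp l _ => hWp ▸ pathM_eq_ncard (fun m => W m ω) p l

/-- `P(· | W_p = -1)`-almost surely, for every `l ∈ {0,…,p}`,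
`M_l = Card{ 0 ≤ j < p : W_j = min_{j ≤ k ≤ p} W_k and
W_j ≤ -1 + min_{0 ≤ k ≤ l} W_k }`. -/
theorem M_combinatorial_formula {Ω : Type*} [MeasurableSpace Ω] (P : Measure Ω)
    [IsProbabilityMeasure P]
    (ν : Measure ℤ) [IsProbabilityMeasure ν] (hν : ν {k : ℤ | k < -1} = 0)
    (ξ : ℕ → Ω → ℤ) (hmeas : ∀ i, Measurable (ξ i))
    (hindep : ProbabilityTheory.iIndepFun ξ P)
    (hdist : ∀ i, Measure.map (ξ i) P = ν)
    (W : ℕ → Ω → ℤ) (hW : ∀ n ω, W n ω = ∑ i ∈ Finset.range n, ξ i ω)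
    (p : ℕ) (hp : 1 ≤ p) (hpos : P {ω | W p ω = -1} ≠ 0) :
    ∀ᵐ ω ∂P, W p ω = -1 → ∀ l ≤ p,
      pathM (fun m => W m ω) p l =
        {j : ℕ | j < p ∧ W j ω = sInf ((fun m => W m ω) '' Set.Icc j p) ∧
          W j ω ≤ -1 + sInf ((fun m => W m ω) '' Set.Icc 0 l)}.ncard :=
  M_combinatorial_formula_general P W p
end
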